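/- arXiv:2602.15239 — 2 statements merged into one kernel-verified Lean document; each statement's English description precedes it below -/
import Mathlib

section
/- Let μ be a Borel probability measure on X, let x_1, …, x_N ∈ X, and let V_1, …, V_N be pairwise disjoint Borel sets whose union is X, with V_j contained in the closed ball of radius r > 0 centered at x_j for every j. Let M ∈ ℝ satisfy ⟨Q f(u), K f(v)⟩ ≤ M for all u, v ∈ X. Then for every point x_i, |∫_X exp(⟨Q f(x_i), K f(y)⟩) dμ(y) − Σ_{j=1}^N exp(⟨Q f(x_i), K f(x_j)⟩)·μ(V_j)| ≤ exp(M)·B_f·C_Q·C_K·r. -/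
/-!
On the cell `P j` the kernel `y ↦ exp ⟪Q f(xᵢ), K f(y)⟫` stays within `exp M · B_f C_Q C_K r` of its
value at `x j`: the exponent moves by at most `‖Q f(xᵢ)‖ ‖K (f y - f(x j))‖ ≤ C_Q B_f · C_K r`, and
`exp` is `exp M`-Lipschitz below `M`. Integrating this cellwise bound against the probability
measure `μ` over the partition gives the estimate.
-/

open MeasureTheory Function
open scoped RealInnerProductSpace

theorem Real.abs_exp_sub_exp_le_of_le {a b M : ℝ} (ha : a ≤ M) (hb : b ≤ M) :
    |Real.exp a - Real.exp b| ≤ Real.exp M * |a - b| := by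
  wlog hba : b ≤ a generalizing a b
  · rw [abs_sub_comm, abs_sub_comm a b]
    exact this hb ha (le_of_not_ge hba)
  rw [abs_of_nonneg (sub_nonneg.2 (Real.exp_le_exp.2 hba)), abs_of_nonneg (sub_nonneg.2 hba)]
  -- `exp a - exp b = exp a (1 - exp (b - a))` and `1 - exp t ≤ -t`
  have hexp : Real.exp a * Real.exp (b - a) = Real.exp b := by rw [← Real.exp_add]; ring_nf
  have htangent := Real.add_one_le_exp (b - a)
  have haM : Real.exp a ≤ Real.exp M := Real.exp_le_exp.2 ha
  nlinarith [Real.exp_pos a]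

theorem abs_inner_map_sub_inner_map_le {E : Type*} [NormedAddCommGroup E] [InnerProductSpace ℝ E]
    {Q K : E →ₗ[ℝ] E} {C_Q C_K : ℝ} (hQ : ∀ u, ‖Q u‖ ≤ C_Q * ‖u‖) (hK : ∀ u, ‖K u‖ ≤ C_K * ‖u‖)
    (a b c : E) : |⟪Q a, K b⟫ - ⟪Q a, K c⟫| ≤ C_Q * ‖a‖ * (C_K * ‖b - c‖) := by
  rw [← inner_sub_right, ← map_sub]
  calc |⟪Q a, K (b - c)⟫| ≤ ‖Q a‖ * ‖K (b - c)‖ := abs_real_inner_le_norm _ _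
    _ ≤ C_Q * ‖a‖ * (C_K * ‖b - c‖) :=
      mul_le_mul (hQ a) (hK _) (norm_nonneg _) ((norm_nonneg _).trans (hQ a))

theorem norm_integral_sub_sum_smul_le_of_partition {X ι E : Type*} [MeasurableSpace X] [Fintype ι]
    [NormedAddCommGroup E] [NormedSpace ℝ E] [CompleteSpace E]
    {μ : Measure X} [IsFiniteMeasure μ] {P : ι → Set X} (hPmeas : ∀ j, MeasurableSet (P j))
    (hPdisj : Pairwise (Disjoint on P)) (hPcover : ⋃ j, P j = Set.univ)
    {g : X → E} (hg : Integrable g μ) {c : ι → E} {ε : ℝ}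
    (hgc : ∀ j, ∀ y ∈ P j, ‖g y - c j‖ ≤ ε) :
    ‖∫ y, g y ∂μ - ∑ j, μ.real (P j) • c j‖ ≤ ε * μ.real Set.univ := by
  have hsplit : ∫ y, g y ∂μ - ∑ j, μ.real (P j) • c j = ∑ j, ∫ y in P j, (g y - c j) ∂μ := by
    rw [← setIntegral_univ, ← hPcover, integral_iUnion_fintype hPmeas hPdisj fun j => hg.integrableOn,
      ← Finset.sum_sub_distrib]
    refine Finset.sum_congr rfl fun j _ => ?_
    rw [integral_sub hg.integrableOn (integrableOn_const (measure_ne_top μ _)), setIntegral_const]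
  calc ‖∫ y, g y ∂μ - ∑ j, μ.real (P j) • c j‖
      ≤ ∑ j, ‖∫ y in P j, (g y - c j) ∂μ‖ := hsplit ▸ norm_sum_le _ _
    _ ≤ ∑ j, ε * μ.real (P j) := Finset.sum_le_sum fun j _ =>
      norm_setIntegral_le_of_norm_le_const (measure_lt_top μ _) (hgc j)
    _ = ε * μ.real Set.univ := by
      rw [← Finset.mul_sum, ← measureReal_iUnion_fintype hPdisj hPmeas, hPcover]

theorem attention_kernel_integral_riemann_bound_general
    {D : ℕ} {X : Type*} [MetricSpace X] [MeasurableSpace X] [BorelSpace X]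
    (μ : Measure X) [IsProbabilityMeasure μ]
    (Q K : EuclideanSpace ℝ (Fin D) →ₗ[ℝ] EuclideanSpace ℝ (Fin D))
    (C_Q C_K B_f r : ℝ) (hCQ : 0 < C_Q) (hCK : 0 < C_K)
    (hQ : ∀ u, ‖Q u‖ ≤ C_Q * ‖u‖) (hK : ∀ u, ‖K u‖ ≤ C_K * ‖u‖)
    (f : X → EuclideanSpace ℝ (Fin D))
    (hfLip : ∀ a b, ‖f a - f b‖ ≤ dist a b)
    (hfB : ∀ x, ‖f x‖ ≤ B_f)
    (N : ℕ) (x : Fin N → X) (P : Fin N → Set X)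
    (hPmeas : ∀ j, MeasurableSet (P j))
    (hPdisj : Pairwise fun j k => Disjoint (P j) (P k))
    (hPcover : (⋃ j, P j) = Set.univ)
    (hPball : ∀ j, P j ⊆ Metric.closedBall (x j) r)
    (M : ℝ) (hM : ∀ u v : X, ⟪Q (f u), K (f v)⟫ ≤ M)
    (i : Fin N) :
    abs ((∫ y, Real.exp ⟪Q (f (x i)), K (f y)⟫ ∂μ) -
         ∑ j, Real.exp ⟪Q (f (x i)), K (f (x j))⟫ * (μ (P j)).toReal)
      ≤ Real.exp M * B_f * C_Q * C_K * r := by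
  set g : X → ℝ := fun y => Real.exp ⟪Q (f (x i)), K (f y)⟫
  have hf : Continuous f :=
    (LipschitzWith.of_dist_le_mul (K := 1) fun a b => by simpa [dist_eq_norm] using hfLip a b).continuous
  have hg : Integrable g μ := by
    refine .of_bound (by fun_prop) (Real.exp M) (.of_forall fun y => ?_)
    simpa [g] using hM (x i) y
  have hcell : ∀ j, ∀ y ∈ P j, ‖g y - g (x j)‖ ≤ Real.exp M * B_f * C_Q * C_K * r := by
    intro j y hy
    have hfxi := hfB (x i)
    have hB_f : 0 ≤ B_f := (norm_nonneg _).trans hfxi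
    have hdist : ‖f y - f (x j)‖ ≤ r := (hfLip y (x j)).trans (hPball j hy)
    calc ‖g y - g (x j)‖ ≤ Real.exp M * |⟪Q (f (x i)), K (f y)⟫ - ⟪Q (f (x i)), K (f (x j))⟫| :=
          Real.abs_exp_sub_exp_le_of_le (hM _ _) (hM _ _)
      _ ≤ Real.exp M * (C_Q * ‖f (x i)‖ * (C_K * ‖f y - f (x j)‖)) := by
          gcongr; exact abs_inner_map_sub_inner_map_le hQ hK _ _ _
      _ ≤ Real.exp M * (C_Q * B_f * (C_K * r)) := by gcongr
      _ = Real.exp M * B_f * C_Q * C_K * r := by ring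
  simpa [g, mul_comm, measureReal_def] using norm_integral_sub_sum_smul_le_of_partition hPmeas hPdisj hPcover hg hcell

/-- For a Borel probability measure `μ` and a partition `P 1, …, P N` of `X`
into Borel sets with `P j ⊆ closedBall (x j) r`, and `M` an upper bound on all attention
inner products, the integral of the attention kernel is approximated by the weighted sum:
`|∫ exp⟨Q f(xi), K f(y)⟩ dμ(y) − Σ_j exp⟨Q f(xi), K f(xj)⟩ μ(P j)| ≤ exp(M)·B_f·C_Q·C_K·r`. -/
theorem attention_kernel_integral_riemann_bound
    {D : ℕ} {X : Type*} [MetricSpace X] [MeasurableSpace X] [BorelSpace X]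
    (μ : Measure X) [IsProbabilityMeasure μ]
    (Q K : EuclideanSpace ℝ (Fin D) →ₗ[ℝ] EuclideanSpace ℝ (Fin D))
    (C_Q C_K B_f r : ℝ) (hCQ : 0 < C_Q) (hCK : 0 < C_K) (hBf : 0 < B_f) (hr : 0 < r)
    (hQ : ∀ u, ‖Q u‖ ≤ C_Q * ‖u‖) (hK : ∀ u, ‖K u‖ ≤ C_K * ‖u‖)
    (f : X → EuclideanSpace ℝ (Fin D))
    (hfLip : ∀ a b, ‖f a - f b‖ ≤ dist a b)
    (hfB : ∀ x, ‖f x‖ ≤ B_f)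
    (N : ℕ) (x : Fin N → X) (P : Fin N → Set X)
    (hPmeas : ∀ j, MeasurableSet (P j))
    (hPdisj : Pairwise fun j k => Disjoint (P j) (P k))
    (hPcover : (⋃ j, P j) = Set.univ)
    (hPball : ∀ j, P j ⊆ Metric.closedBall (x j) r)
    (M : ℝ) (hM : ∀ u v : X, ⟪Q (f u), K (f v)⟫ ≤ M)
    (i : Fin N) :
    abs ((∫ y, Real.exp ⟪Q (f (x i)), K (f y)⟫ ∂μ) -
         ∑ j, Real.exp ⟪Q (f (x i)), K (f (x j))⟫ * (μ (P j)).toReal)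
      ≤ Real.exp M * B_f * C_Q * C_K * r :=
  attention_kernel_integral_riemann_bound_general μ Q K C_Q C_K B_f r hCQ hCK hQ hK f hfLip hfB N x
    P hPmeas hPdisj hPcover hPball M hM i
end

section
/- (Deterministic form of the paper's Corollary 3.3, transferability of graph transformers across graph sizes.) Let μ be a Borel probability measure on X. For k = 1, 2, let x^{(k)}_1, …, x^{(k)}_{N_k} ∈ X and let V^{(k)}_1, …, V^{(k)}_{N_k} be pairwise disjoint Borel sets whose union is X, with V^{(k)}_j contained in the closed ball of radius r_k > 0 centered at x^{(k)}_j and μ(V^{(k)}_j) = 1/N_k for every j. Assume ‖f(x)‖ ≤ 1 for all x ∈ X; for each k let X^{(k)}_1, …, X^{(k)}_{N_k} ∈ ℝ^D satisfy ‖X^{(k)}_j − f(x^{(k)}_j)‖ ≤ Δ_k and ‖X^{(k)}_j‖ ≤ 1 for all j; and let M ≥ 0 satisfy |⟨Q X^{(k)}_i, K X^{(k)}_j⟩| ≤ M for all k, i, j and |⟨Q f(u), K f(v)⟩| ≤ M for all u, v ∈ X. Let Φ_{G_k}(i) denote the graph-transformer attention output on sample k, and (I_{N_k} Φ_{G_k})(x)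 = Φ_{G_k}(j) for x ∈ V^{(k)}_j its piecewise-constant interpolation. Set Δ_{Φ_k} = (C_V + 4·exp(2M)·C_Q·C_K·C_V)·Δ_k + (exp(M)·C_V + 2·exp(2M)·C_Q·C_K·C_V)·r_k. Then ∫_X ‖(I_{N_1} Φ_{G_1})(x) − (I_{N_2} Φ_{G_2})(x)‖ dμ(x) ≤ Δ_{Φ_1} + Δ_{Φ_2} + 2·exp(2M)·C_Q·C_K·C_V·(r_1 + r_2). -/
/-!
Both interpolated outputs are compared with the continuous attention
`Φ_F(x) = (∫ e^{⟪Q F(x), K F(y)⟫} V F(y) dμ(y)) / ∫ e^{⟪Q F(x), K F(y)⟫} dμ(y)` of the feature map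
`F = f`. Since every cell has mass `1/N`, the discrete attention at node `j` is exactly `Φ_F(x)` for
`x` in the `j`-th cell and `F` the step function equal to `X_j` on that cell, and this `F` is within
`Δ + r` of `f`. Perturbing the features by `δ` moves the scores by at most `2 C_Q C_K δ`, hence the
exponential weights by at most `e^M` times that, while the normalising constants stay above
`e^{-M}`; so `Φ` moves by at most `(C_V + 4 e^{2M} C_Q C_K C_V) δ`. The triangle inequality through
`Φ_f` and `e^M ≥ 1` finish the proof.
-/

open MeasureTheory Real Set
open scoped RealInnerProductSpace

section Attention

variable {X E G : Type*} [MeasurableSpace X] [NormedAddCommGroup E] [InnerProductSpace ℝ E]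
  [NormedAddCommGroup G] [NormedSpace ℝ G]

theorem abs_exp_sub_exp_le {a b M : ℝ} (ha : a ≤ M) (hb : b ≤ M) :
    |exp a - exp b| ≤ exp M * |a - b| := by
  wlog hba : b ≤ a generalizing a b
  · rw [abs_sub_comm, abs_sub_comm a]
    exact this hb ha (le_of_not_ge hba)
  have hle : exp a - exp b ≤ exp a * (a - b) := by
    have hb' : exp b = exp a * exp (b - a) := by rw [← exp_add]; ring_nf
    nlinarith [add_one_le_exp (b - a), exp_pos a]
  rw [abs_of_nonneg (sub_nonneg.2 (exp_le_exp.2 hba)), abs_of_nonneg (sub_nonneg.2 hba)]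
  exact hle.trans (mul_le_mul_of_nonneg_right (exp_le_exp.2 ha) (sub_nonneg.2 hba))

theorem abs_inner_sub_inner_le (a₁ a₂ b₁ b₂ : E) :
    |⟪a₁, b₁⟫ - ⟪a₂, b₂⟫| ≤ ‖a₁‖ * ‖b₁ - b₂‖ + ‖a₁ - a₂‖ * ‖b₂‖ := by
  have hsplit : ⟪a₁, b₁⟫ - ⟪a₂, b₂⟫ = ⟪a₁, b₁ - b₂⟫ + ⟪a₁ - a₂, b₂⟫ := by
    rw [inner_sub_right, inner_sub_left]; ring
  rw [hsplit]
  exact (abs_add_le _ _).trans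
    (add_le_add (abs_real_inner_le_norm _ _) (abs_real_inner_le_norm _ _))

theorem norm_inv_smul_sub_inv_smul_le {a b C : ℝ} {p q : G} (ha : 0 < a) (hb : 0 < b)
    (hq : ‖q‖ ≤ C * b) : ‖a⁻¹ • p - b⁻¹ • q‖ ≤ (‖p - q‖ + C * |a - b|) / a := by
  have hsplit : a⁻¹ • p - b⁻¹ • q = a⁻¹ • ((p - q) + ((b - a) / b) • q) := by
    have hcoef : a⁻¹ * ((b - a) / b) = a⁻¹ - b⁻¹ := by field_simp
    rw [smul_add, smul_smul, hcoef, sub_smul, smul_sub]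
    abel
  have hcorr : ‖((b - a) / b) • q‖ ≤ C * |a - b| := by
    rw [norm_smul, Real.norm_eq_abs, abs_div, abs_of_pos hb, abs_sub_comm]
    calc |a - b| / b * ‖q‖ ≤ |a - b| / b * (C * b) := by gcongr
      _ = C * |a - b| := by field_simp
  rw [hsplit, norm_smul, Real.norm_of_nonneg (inv_nonneg.2 ha.le), inv_mul_eq_div]
  gcongr
  exact (norm_add_le _ _).trans (add_le_add_right hcorr _)

theorem norm_weightedAverage_sub_weightedAverage_le {μ : Measure X} {a b : X → ℝ} {u w : X → G}
    {C η : ℝ} (ha : Integrable a μ) (hb : Integrable b μ)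
    (hau : Integrable (fun y => a y • u y) μ) (hbw : Integrable (fun y => b y • w y) μ)
    (ha0 : ∀ y, 0 ≤ a y) (hb0 : ∀ y, 0 ≤ b y) (hZa : 0 < ∫ y, a y ∂μ) (hZb : 0 < ∫ y, b y ∂μ)
    (hC : 0 ≤ C) (hw : ∀ y, ‖w y‖ ≤ C) (huw : ∀ y, ‖u y - w y‖ ≤ η) :
    ‖(∫ y, a y ∂μ)⁻¹ • ∫ y, a y • u y ∂μ - (∫ y, b y ∂μ)⁻¹ • ∫ y, b y • w y ∂μ‖
      ≤ η + 2 * C * (∫ y, |a y - b y| ∂μ) / ∫ y, a y ∂μ := by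
  have hab : Integrable (fun y => |a y - b y|) μ := (ha.sub hb).abs
  have hq : ‖∫ y, b y • w y ∂μ‖ ≤ C * ∫ y, b y ∂μ := by
    rw [← integral_const_mul]
    refine norm_integral_le_of_norm_le (hb.const_mul C) (ae_of_all _ fun y => ?_)
    rw [norm_smul, Real.norm_of_nonneg (hb0 y), mul_comm]
    exact mul_le_mul_of_nonneg_right (hw y) (hb0 y)
  have hpq : ‖∫ y, a y • u y ∂μ - ∫ y, b y • w y ∂μ‖
      ≤ η * (∫ y, a y ∂μ) + C * ∫ y, |a y - b y| ∂μ := by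
    rw [← integral_sub hau hbw, ← integral_const_mul, ← integral_const_mul,
      ← integral_add (ha.const_mul η) (hab.const_mul C)]
    refine norm_integral_le_of_norm_le ((ha.const_mul η).add (hab.const_mul C))
      (ae_of_all _ fun y => ?_)
    have hsplit : a y • u y - b y • w y = a y • (u y - w y) + (a y - b y) • w y := by
      rw [smul_sub, sub_smul]; abel
    rw [hsplit]
    refine (norm_add_le _ _).trans (add_le_add ?_ ?_)
    · rw [norm_smul, Real.norm_of_nonneg (ha0 y), mul_comm η]
      exact mul_le_mul_of_nonneg_left (huw y) (ha0 y)
    · rw [norm_smul, Real.norm_eq_abs, mul_comm C]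
      exact mul_le_mul_of_nonneg_left (hw y) (abs_nonneg _)
  have hZ : |(∫ y, a y ∂μ) - ∫ y, b y ∂μ| ≤ ∫ y, |a y - b y| ∂μ := by
    rw [← integral_sub ha hb]
    exact abs_integral_le_integral_abs
  calc _ ≤ (‖∫ y, a y • u y ∂μ - ∫ y, b y • w y ∂μ‖
          + C * |(∫ y, a y ∂μ) - ∫ y, b y ∂μ|) / ∫ y, a y ∂μ :=
        norm_inv_smul_sub_inv_smul_le hZa hZb hq
    _ ≤ (η * (∫ y, a y ∂μ) + 2 * C * ∫ y, |a y - b y| ∂μ) / ∫ y, a y ∂μ := by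
        gcongr ?_ / _
        linarith [mul_le_mul_of_nonneg_left hZ hC]
    _ = η + 2 * C * (∫ y, |a y - b y| ∂μ) / ∫ y, a y ∂μ := by
        field_simp

theorem norm_softmaxAverage_sub_softmaxAverage_le (μ : Measure X) [IsProbabilityMeasure μ]
    {s₁ s₂ : X → ℝ} {u w : X → G} {M ε C η : ℝ} (hs₁ : AEStronglyMeasurable s₁ μ)
    (hs₂ : AEStronglyMeasurable s₂ μ) (hu : AEStronglyMeasurable u μ)
    (hw : AEStronglyMeasurable w μ) (hM₁ : ∀ y, |s₁ y| ≤ M) (hM₂ : ∀ y, |s₂ y| ≤ M)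
    (hε : ∀ y, |s₁ y - s₂ y| ≤ ε) (hC : 0 ≤ C) (hwC : ∀ y, ‖w y‖ ≤ C)
    (huw : ∀ y, ‖u y - w y‖ ≤ η) :
    ‖(∫ y, exp (s₁ y) ∂μ)⁻¹ • ∫ y, exp (s₁ y) • u y ∂μ
        - (∫ y, exp (s₂ y) ∂μ)⁻¹ • ∫ y, exp (s₂ y) • w y ∂μ‖
      ≤ η + 2 * exp (2 * M) * C * ε := by
  have hexp_le {s : X → ℝ} (hM : ∀ y, |s y| ≤ M) (y : X) : ‖exp (s y)‖ ≤ exp M := by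
    rw [Real.norm_of_nonneg (exp_pos _).le]
    exact exp_le_exp.2 (le_of_abs_le (hM y))
  have hint {s : X → ℝ} (hs : AEStronglyMeasurable s μ) (hM : ∀ y, |s y| ≤ M) :
      Integrable (fun y => exp (s y)) μ :=
    .of_bound (continuous_exp.comp_aestronglyMeasurable hs) _ (ae_of_all _ (hexp_le hM))
  have hint_smul {s : X → ℝ} {v : X → G} {B : ℝ} (hs : AEStronglyMeasurable s μ)
      (hv : AEStronglyMeasurable v μ) (hM : ∀ y, |s y| ≤ M) (hB : ∀ y, ‖v y‖ ≤ B) :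
      Integrable (fun y => exp (s y) • v y) μ :=
    .of_bound ((continuous_exp.comp_aestronglyMeasurable hs).smul hv) (exp M * B)
      (ae_of_all _ fun y => by
        rw [norm_smul]
        exact mul_le_mul (hexp_le hM y) (hB y) (norm_nonneg _) (exp_pos _).le)
  have hZ_ge {s : X → ℝ} (hs : AEStronglyMeasurable s μ) (hM : ∀ y, |s y| ≤ M) :
      exp (-M) ≤ ∫ y, exp (s y) ∂μ := by
    simpa using integral_mono (integrable_const (exp (-M))) (hint hs hM)
      fun y => exp_le_exp.2 (neg_le_of_abs_le (hM y))
  have hdiff : ∫ y, |exp (s₁ y) - exp (s₂ y)| ∂μ ≤ exp M * ε := by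
    simpa using integral_mono ((hint hs₁ hM₁).sub (hint hs₂ hM₂)).abs
      (integrable_const (exp M * ε)) fun y =>
        (abs_exp_sub_exp_le (le_of_abs_le (hM₁ y)) (le_of_abs_le (hM₂ y))).trans
          (mul_le_mul_of_nonneg_left (hε y) (exp_pos M).le)
  have hratio : (∫ y, |exp (s₁ y) - exp (s₂ y)| ∂μ) / ∫ y, exp (s₁ y) ∂μ ≤ exp (2 * M) * ε :=
    calc _ ≤ exp M * ε / exp (-M) :=
          div_le_div₀ ((integral_nonneg fun _ => abs_nonneg _).trans hdiff) hdiff (exp_pos _)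
            (hZ_ge hs₁ hM₁)
      _ = exp (2 * M) * ε := by rw [exp_neg, div_inv_eq_mul, two_mul M, exp_add]; ring
  have huC : ∀ y, ‖u y‖ ≤ C + η := fun y =>
    (norm_le_norm_add_norm_sub' (u y) (w y)).trans (add_le_add (hwC y) (huw y))
  calc _ ≤ η + 2 * C * (∫ y, |exp (s₁ y) - exp (s₂ y)| ∂μ) / ∫ y, exp (s₁ y) ∂μ :=
        norm_weightedAverage_sub_weightedAverage_le (hint hs₁ hM₁) (hint hs₂ hM₂)
          (hint_smul hs₁ hu hM₁ huC) (hint_smul hs₂ hw hM₂ hwC) (fun _ => (exp_pos _).le)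
          (fun _ => (exp_pos _).le) ((exp_pos _).trans_le (hZ_ge hs₁ hM₁))
          ((exp_pos _).trans_le (hZ_ge hs₂ hM₂)) hC hwC huw
    _ ≤ η + 2 * exp (2 * M) * C * ε := by
        rw [mul_div_assoc]
        nlinarith [mul_le_mul_of_nonneg_left hratio (by positivity : (0 : ℝ) ≤ 2 * C)]

noncomputable def attention (μ : Measure X) (Q K V : E →ₗ[ℝ] E) (F : X → E) (x : X) : E :=
  (∫ y, exp ⟪Q (F x), K (F y)⟫ ∂μ)⁻¹ • ∫ y, exp ⟪Q (F x), K (F y)⟫ • V (F y) ∂μ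

theorem norm_attention_sub_attention_le (μ : Measure X) [IsProbabilityMeasure μ]
    (Q K V : E →ₗ[ℝ] E) {C_Q C_K C_V M δ : ℝ} (hCQ : 0 ≤ C_Q) (hCK : 0 ≤ C_K) (hCV : 0 ≤ C_V)
    (hQ : ∀ u, ‖Q u‖ ≤ C_Q * ‖u‖) (hK : ∀ u, ‖K u‖ ≤ C_K * ‖u‖) (hV : ∀ u, ‖V u‖ ≤ C_V * ‖u‖)
    {F₁ F₂ : X → E} (hF₁ : AEStronglyMeasurable F₁ μ) (hF₂ : AEStronglyMeasurable F₂ μ)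
    (hF₁1 : ∀ y, ‖F₁ y‖ ≤ 1) (hF₂1 : ∀ y, ‖F₂ y‖ ≤ 1) (hδ : ∀ y, ‖F₁ y - F₂ y‖ ≤ δ) (x : X)
    (hM₁ : ∀ y, |⟪Q (F₁ x), K (F₁ y)⟫| ≤ M) (hM₂ : ∀ y, |⟪Q (F₂ x), K (F₂ y)⟫| ≤ M) :
    ‖attention μ Q K V F₁ x - attention μ Q K V F₂ x‖
      ≤ (C_V + 4 * exp (2 * M) * C_Q * C_K * C_V) * δ := by
  have hKc := AddMonoidHomClass.continuous_of_bound K C_K hK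
  have hVc := AddMonoidHomClass.continuous_of_bound V C_V hV
  have hunit {L : E →ₗ[ℝ] E} {C : ℝ} (hC : 0 ≤ C) (hL : ∀ u, ‖L u‖ ≤ C * ‖u‖) {u : E}
      (hu : ‖u‖ ≤ 1) : ‖L u‖ ≤ C :=
    (hL u).trans (mul_le_of_le_one_right hC hu)
  have hδmap {L : E →ₗ[ℝ] E} {C : ℝ} (hC : 0 ≤ C) (hL : ∀ u, ‖L u‖ ≤ C * ‖u‖) (y : X) :
      ‖L (F₁ y) - L (F₂ y)‖ ≤ C * δ := by
    rw [← map_sub]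
    exact (hL _).trans (mul_le_mul_of_nonneg_left (hδ y) hC)
  have hscore : ∀ y, |⟪Q (F₁ x), K (F₁ y)⟫ - ⟪Q (F₂ x), K (F₂ y)⟫| ≤ 2 * C_Q * C_K * δ := by
    intro y
    refine (abs_inner_sub_inner_le _ _ _ _).trans ?_
    have h₁ : ‖Q (F₁ x)‖ * ‖K (F₁ y) - K (F₂ y)‖ ≤ C_Q * (C_K * δ) :=
      mul_le_mul (hunit hCQ hQ (hF₁1 x)) (hδmap hCK hK y) (norm_nonneg _) hCQ
    have h₂ : ‖Q (F₁ x) - Q (F₂ x)‖ * ‖K (F₂ y)‖ ≤ C_Q * δ * C_K :=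
      mul_le_mul (hδmap hCQ hQ x) (hunit hCK hK (hF₂1 y)) (norm_nonneg _)
        ((norm_nonneg _).trans (hδmap hCQ hQ x))
    linarith
  have hscore_meas {F : X → E} (hF : AEStronglyMeasurable F μ) :
      AEStronglyMeasurable (fun y => ⟪Q (F x), K (F y)⟫) μ :=
    (continuous_const.inner hKc).comp_aestronglyMeasurable hF
  calc _ ≤ C_V * δ + 2 * exp (2 * M) * C_V * (2 * C_Q * C_K * δ) :=
        norm_softmaxAverage_sub_softmaxAverage_le μ (hscore_meas hF₁) (hscore_meas hF₂)
          (hVc.comp_aestronglyMeasurable hF₁) (hVc.comp_aestronglyMeasurable hF₂) hM₁ hM₂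
          hscore hCV (fun y => hunit hCV hV (hF₂1 y)) (hδmap hCV hV)
    _ = (C_V + 4 * exp (2 * M) * C_Q * C_K * C_V) * δ := by ring

theorem integral_comp_eq_sum_measureReal_preimage {μ : Measure X} [IsFiniteMeasure μ]
    [CompleteSpace G] {ι : Type*} [Fintype ι] [MeasurableSpace ι] [MeasurableSingletonClass ι]
    {h : X → ι} (hh : Measurable h) (φ : ι → G) :
    ∫ y, φ (h y) ∂μ = ∑ i, μ.real (h ⁻¹' {i}) • φ i := by
  rw [← integral_map hh.aemeasurable Integrable.of_finite.aestronglyMeasurable,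
    integral_fintype Integrable.of_finite]
  simp_rw [map_measureReal_apply hh (measurableSet_singleton _)]

noncomputable def graphAttention (Q K V : E →ₗ[ℝ] E) {N : ℕ} (Xv : Fin N → E) (i : Fin N) : E :=
  (∑ j, exp ⟪Q (Xv i), K (Xv j)⟫)⁻¹ • ∑ j, exp ⟪Q (Xv i), K (Xv j)⟫ • V (Xv j)

theorem attention_comp_eq_graphAttention {μ : Measure X} [IsFiniteMeasure μ] [CompleteSpace E]
    (Q K V : E →ₗ[ℝ] E) {N : ℕ} {h : X → Fin N} (hh : Measurable h)
    (hmass : ∀ j, μ (h ⁻¹' {j}) = (N : ENNReal)⁻¹) (Xv : Fin N → E) (x : X) :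
    attention μ Q K V (fun y => Xv (h y)) x = graphAttention Q K V Xv (h x) := by
  have hN : (N : ℝ) ≠ 0 := Nat.cast_ne_zero.2 (h x).pos.ne'
  have hreal : ∀ j, μ.real (h ⁻¹' {j}) = (N : ℝ)⁻¹ := fun j => by
    simp [measureReal_def, hmass]
  rw [attention, integral_comp_eq_sum_measureReal_preimage hh
      (fun j => exp ⟪Q (Xv (h x)), K (Xv j)⟫),
    integral_comp_eq_sum_measureReal_preimage hh
      (fun j => exp ⟪Q (Xv (h x)), K (Xv j)⟫ • V (Xv j))]
  simp only [hreal]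
  rw [← Finset.smul_sum, ← Finset.smul_sum, smul_eq_mul, smul_smul, graphAttention]
  congr 1
  field_simp

end Attention

theorem norm_interpolation_sub_attention_le {X E : Type*} [MetricSpace X] [MeasurableSpace X]
    [BorelSpace X] [NormedAddCommGroup E] [InnerProductSpace ℝ E] [CompleteSpace E]
    [SecondCountableTopology E] (μ : Measure X) [IsProbabilityMeasure μ] (Q K V : E →ₗ[ℝ] E)
    {C_Q C_K C_V M Δ r : ℝ} (hCQ : 0 ≤ C_Q) (hCK : 0 ≤ C_K) (hCV : 0 ≤ C_V)
    (hQ : ∀ u, ‖Q u‖ ≤ C_Q * ‖u‖) (hK : ∀ u, ‖K u‖ ≤ C_K * ‖u‖) (hV : ∀ u, ‖V u‖ ≤ C_V * ‖u‖)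
    {f : X → E} (hfLip : ∀ a b, ‖f a - f b‖ ≤ dist a b) (hf1 : ∀ a, ‖f a‖ ≤ 1)
    (hMf : ∀ u v, |⟪Q (f u), K (f v)⟫| ≤ M)
    {N : ℕ} {x : Fin N → X} {P : Fin N → Set X} (hmeas : ∀ j, MeasurableSet (P j))
    (hdisj : Pairwise fun j k => Disjoint (P j) (P k)) (hcover : (⋃ j, P j) = univ)
    (hball : ∀ j, P j ⊆ Metric.closedBall (x j) r) (hmass : ∀ j, μ (P j) = (N : ENNReal)⁻¹)
    {Xv : Fin N → E} (hXv : ∀ j, ‖Xv j - f (x j)‖ ≤ Δ) (hXv1 : ∀ j, ‖Xv j‖ ≤ 1)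
    (hM : ∀ i j, |⟪Q (Xv i), K (Xv j)⟫| ≤ M)
    {g : X → E} (hg : ∀ j, ∀ y ∈ P j, g y = graphAttention Q K V Xv j) (y : X) :
    ‖g y - attention μ Q K V f y‖ ≤ (C_V + 4 * exp (2 * M) * C_Q * C_K * C_V) * (Δ + r) := by
  let hP : IndexedPartition P := .mk' P hdisj
    (fun j => nonempty_of_measure_ne_zero (μ := μ) (by simp [hmass]))
    (fun y => mem_iUnion.1 (hcover ▸ mem_univ y))
  have hfiber : ∀ j, hP.index ⁻¹' {j} = P j := fun j => (hP.eq j).symm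
  have hindex : Measurable hP.index :=
    measurable_to_countable' fun j => hfiber j ▸ hmeas j
  have hstep : ∀ z, ‖Xv (hP.index z) - f z‖ ≤ Δ + r := fun z => by
    have hz : dist z (x (hP.index z)) ≤ r := hball _ (hP.mem_index z)
    calc ‖Xv (hP.index z) - f z‖
        ≤ ‖Xv (hP.index z) - f (x (hP.index z))‖ + ‖f (x (hP.index z)) - f z‖ :=
          norm_sub_le_norm_sub_add_norm_sub _ _ _
      _ ≤ Δ + r := add_le_add (hXv _) ((hfLip _ _).trans (dist_comm z _ ▸ hz))
  have hf : Continuous f := (LipschitzWith.of_dist_le_mul (K := 1) fun a b => by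
    simpa [dist_eq_norm] using hfLip a b).continuous
  rw [hg _ y (hP.mem_index y),
    ← attention_comp_eq_graphAttention Q K V hindex (fun j => hfiber j ▸ hmass j)]
  exact norm_attention_sub_attention_le μ Q K V hCQ hCK hCV hQ hK hV
    (hP.stronglyMeasurable_piecewise hmeas fun j => stronglyMeasurable_const).aestronglyMeasurable
    hf.aestronglyMeasurable (fun _ => hXv1 _) hf1 hstep y (fun _ => hM _ _) (hMf y)

theorem graph_transformer_transferability_general
    {D : ℕ} {X : Type*} [MetricSpace X] [MeasurableSpace X] [BorelSpace X]
    (μ : Measure X) [IsProbabilityMeasure μ]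
    (Q K V : EuclideanSpace ℝ (Fin D) →ₗ[ℝ] EuclideanSpace ℝ (Fin D))
    (C_Q C_K C_V Δ₁ Δ₂ r₁ r₂ : ℝ)
    (hCQ : 0 < C_Q) (hCK : 0 < C_K) (hCV : 0 < C_V)
    (hr₁ : 0 < r₁) (hr₂ : 0 < r₂)
    (hQ : ∀ u, ‖Q u‖ ≤ C_Q * ‖u‖) (hK : ∀ u, ‖K u‖ ≤ C_K * ‖u‖)
    (hV : ∀ u, ‖V u‖ ≤ C_V * ‖u‖)
    (f : X → EuclideanSpace ℝ (Fin D))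
    (hfLip : ∀ a b, ‖f a - f b‖ ≤ dist a b)
    (hf1 : ∀ a : X, ‖f a‖ ≤ 1)
    -- first sample
    (N₁ : ℕ) (x₁ : Fin N₁ → X) (P₁ : Fin N₁ → Set X)
    (hP₁meas : ∀ j, MeasurableSet (P₁ j))
    (hP₁disj : Pairwise fun j k => Disjoint (P₁ j) (P₁ k))
    (hP₁cover : (⋃ j, P₁ j) = Set.univ)
    (hP₁ball : ∀ j, P₁ j ⊆ Metric.closedBall (x₁ j) r₁)
    (hP₁mass : ∀ j, μ (P₁ j) = (N₁ : ENNReal)⁻¹)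
    (Xv₁ : Fin N₁ → EuclideanSpace ℝ (Fin D))
    (hXv₁ : ∀ j, ‖Xv₁ j - f (x₁ j)‖ ≤ Δ₁) (hXv₁1 : ∀ j, ‖Xv₁ j‖ ≤ 1)
    -- second sample
    (N₂ : ℕ) (x₂ : Fin N₂ → X) (P₂ : Fin N₂ → Set X)
    (hP₂meas : ∀ j, MeasurableSet (P₂ j))
    (hP₂disj : Pairwise fun j k => Disjoint (P₂ j) (P₂ k))
    (hP₂cover : (⋃ j, P₂ j) = Set.univ)
    (hP₂ball : ∀ j, P₂ j ⊆ Metric.closedBall (x₂ j) r₂)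
    (hP₂mass : ∀ j, μ (P₂ j) = (N₂ : ENNReal)⁻¹)
    (Xv₂ : Fin N₂ → EuclideanSpace ℝ (Fin D))
    (hXv₂ : ∀ j, ‖Xv₂ j - f (x₂ j)‖ ≤ Δ₂) (hXv₂1 : ∀ j, ‖Xv₂ j‖ ≤ 1)
    -- attention bound
    (M : ℝ) (hM0 : 0 ≤ M)
    (hM₁ : ∀ i j, abs ⟪Q (Xv₁ i), K (Xv₁ j)⟫ ≤ M)
    (hM₂ : ∀ i j, abs ⟪Q (Xv₂ i), K (Xv₂ j)⟫ ≤ M)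
    (hMf : ∀ u v : X, abs ⟪Q (f u), K (f v)⟫ ≤ M)
    -- piecewise-constant interpolations of the graph-transformer outputs
    (g₁ g₂ : X → EuclideanSpace ℝ (Fin D))
    (hg₁ : ∀ j : Fin N₁, ∀ y ∈ P₁ j,
      g₁ y = (∑ k, Real.exp ⟪Q (Xv₁ j), K (Xv₁ k)⟫)⁻¹ •
              (∑ k, Real.exp ⟪Q (Xv₁ j), K (Xv₁ k)⟫ • V (Xv₁ k)))
    (hg₂ : ∀ j : Fin N₂, ∀ y ∈ P₂ j,
      g₂ y = (∑ k, Real.exp ⟪Q (Xv₂ j), K (Xv₂ k)⟫)⁻¹ •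
              (∑ k, Real.exp ⟪Q (Xv₂ j), K (Xv₂ k)⟫ • V (Xv₂ k)))
    (ΔΦ₁ ΔΦ₂ : ℝ)
    (hΔΦ₁ : ΔΦ₁ = (C_V + 4 * Real.exp (2 * M) * C_Q * C_K * C_V) * Δ₁ +
        (Real.exp M * C_V + 2 * Real.exp (2 * M) * C_Q * C_K * C_V) * r₁)
    (hΔΦ₂ : ΔΦ₂ = (C_V + 4 * Real.exp (2 * M) * C_Q * C_K * C_V) * Δ₂ +
        (Real.exp M * C_V + 2 * Real.exp (2 * M) * C_Q * C_K * C_V) * r₂) :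
    (∫ y, ‖g₁ y - g₂ y‖ ∂μ)
      ≤ ΔΦ₁ + ΔΦ₂ + 2 * Real.exp (2 * M) * C_Q * C_K * C_V * (r₁ + r₂) := by
  have hΦ₁ := norm_interpolation_sub_attention_le μ Q K V hCQ.le hCK.le hCV.le hQ hK hV hfLip hf1
    hMf hP₁meas hP₁disj hP₁cover hP₁ball hP₁mass hXv₁ hXv₁1 hM₁ hg₁
  have hΦ₂ := norm_interpolation_sub_attention_le μ Q K V hCQ.le hCK.le hCV.le hQ hK hV hfLip hf1
    hMf hP₂meas hP₂disj hP₂cover hP₂ball hP₂mass hXv₂ hXv₂1 hM₂ hg₂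
  have hpt : ∀ y, ‖g₁ y - g₂ y‖
      ≤ ΔΦ₁ + ΔΦ₂ + 2 * Real.exp (2 * M) * C_Q * C_K * C_V * (r₁ + r₂) := fun y => by
    have hexpM : 0 ≤ (Real.exp M - 1) * C_V :=
      mul_nonneg (sub_nonneg.2 (Real.one_le_exp hM0)) hCV.le
    calc ‖g₁ y - g₂ y‖ ≤ ‖g₁ y - attention μ Q K V f y‖ + ‖g₂ y - attention μ Q K V f y‖ := by
          simpa only [dist_eq_norm] using dist_triangle_right (g₁ y) (g₂ y) _
      _ ≤ _ := add_le_add (hΦ₁ y) (hΦ₂ y)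
      _ ≤ _ := by
          rw [hΔΦ₁, hΔΦ₂]
          linarith [mul_nonneg hexpM hr₁.le, mul_nonneg hexpM hr₂.le]
  calc (∫ y, ‖g₁ y - g₂ y‖ ∂μ) ≤ ‖∫ y, ‖g₁ y - g₂ y‖ ∂μ‖ := Real.le_norm_self _
    _ ≤ _ * μ.real univ :=
        norm_integral_le_of_norm_le_const (ae_of_all _ fun y => (norm_norm _).trans_le (hpt y))
    _ = _ := by rw [probReal_univ, mul_one]

/-- deterministic form of Corollary 3.3: transferability of graph
transformers across graph sizes. For two samples of sizes `N₁` and `N₂` with partitions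
of radii `r₁, r₂`, equal cell masses `1/N₁`, `1/N₂`, positional encodings with errors
`Δ₁, Δ₂`, and `M` bounding all attention inner products, the piecewise-constant
interpolations `g₁, g₂` of the two graph-transformer outputs satisfy
`∫ ‖g₁ − g₂‖ dμ ≤ Δ_{Φ₁} + Δ_{Φ₂} + 2·exp(2M)·C_Q·C_K·C_V·(r₁ + r₂)`. -/
theorem graph_transformer_transferability
    {D : ℕ} {X : Type*} [MetricSpace X] [MeasurableSpace X] [BorelSpace X]
    (μ : Measure X) [IsProbabilityMeasure μ]
    (Q K V : EuclideanSpace ℝ (Fin D) →ₗ[ℝ] EuclideanSpace ℝ (Fin D))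
    (C_Q C_K C_V Δ₁ Δ₂ r₁ r₂ : ℝ)
    (hCQ : 0 < C_Q) (hCK : 0 < C_K) (hCV : 0 < C_V)
    (hΔ₁ : 0 ≤ Δ₁) (hΔ₂ : 0 ≤ Δ₂) (hr₁ : 0 < r₁) (hr₂ : 0 < r₂)
    (hQ : ∀ u, ‖Q u‖ ≤ C_Q * ‖u‖) (hK : ∀ u, ‖K u‖ ≤ C_K * ‖u‖)
    (hV : ∀ u, ‖V u‖ ≤ C_V * ‖u‖)
    (f : X → EuclideanSpace ℝ (Fin D))
    (hfLip : ∀ a b, ‖f a - f b‖ ≤ dist a b)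
    (hf1 : ∀ a : X, ‖f a‖ ≤ 1)
    -- first sample
    (N₁ : ℕ) (x₁ : Fin N₁ → X) (P₁ : Fin N₁ → Set X)
    (hP₁meas : ∀ j, MeasurableSet (P₁ j))
    (hP₁disj : Pairwise fun j k => Disjoint (P₁ j) (P₁ k))
    (hP₁cover : (⋃ j, P₁ j) = Set.univ)
    (hP₁ball : ∀ j, P₁ j ⊆ Metric.closedBall (x₁ j) r₁)
    (hP₁mass : ∀ j, μ (P₁ j) = (N₁ : ENNReal)⁻¹)
    (Xv₁ : Fin N₁ → EuclideanSpace ℝ (Fin D))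
    (hXv₁ : ∀ j, ‖Xv₁ j - f (x₁ j)‖ ≤ Δ₁) (hXv₁1 : ∀ j, ‖Xv₁ j‖ ≤ 1)
    -- second sample
    (N₂ : ℕ) (x₂ : Fin N₂ → X) (P₂ : Fin N₂ → Set X)
    (hP₂meas : ∀ j, MeasurableSet (P₂ j))
    (hP₂disj : Pairwise fun j k => Disjoint (P₂ j) (P₂ k))
    (hP₂cover : (⋃ j, P₂ j) = Set.univ)
    (hP₂ball : ∀ j, P₂ j ⊆ Metric.closedBall (x₂ j) r₂)
    (hP₂mass : ∀ j, μ (P₂ j) = (N₂ : ENNReal)⁻¹)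
    (Xv₂ : Fin N₂ → EuclideanSpace ℝ (Fin D))
    (hXv₂ : ∀ j, ‖Xv₂ j - f (x₂ j)‖ ≤ Δ₂) (hXv₂1 : ∀ j, ‖Xv₂ j‖ ≤ 1)
    -- attention bound
    (M : ℝ) (hM0 : 0 ≤ M)
    (hM₁ : ∀ i j, abs ⟪Q (Xv₁ i), K (Xv₁ j)⟫ ≤ M)
    (hM₂ : ∀ i j, abs ⟪Q (Xv₂ i), K (Xv₂ j)⟫ ≤ M)
    (hMf : ∀ u v : X, abs ⟪Q (f u), K (f v)⟫ ≤ M)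
    -- piecewise-constant interpolations of the graph-transformer outputs
    (g₁ g₂ : X → EuclideanSpace ℝ (Fin D))
    (hg₁ : ∀ j : Fin N₁, ∀ y ∈ P₁ j,
      g₁ y = (∑ k, Real.exp ⟪Q (Xv₁ j), K (Xv₁ k)⟫)⁻¹ •
              (∑ k, Real.exp ⟪Q (Xv₁ j), K (Xv₁ k)⟫ • V (Xv₁ k)))
    (hg₂ : ∀ j : Fin N₂, ∀ y ∈ P₂ j,
      g₂ y = (∑ k, Real.exp ⟪Q (Xv₂ j), K (Xv₂ k)⟫)⁻¹ •
              (∑ k, Real.exp ⟪Q (Xv₂ j), K (Xv₂ k)⟫ • V (Xv₂ k)))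
    (ΔΦ₁ ΔΦ₂ : ℝ)
    (hΔΦ₁ : ΔΦ₁ = (C_V + 4 * Real.exp (2 * M) * C_Q * C_K * C_V) * Δ₁ +
        (Real.exp M * C_V + 2 * Real.exp (2 * M) * C_Q * C_K * C_V) * r₁)
    (hΔΦ₂ : ΔΦ₂ = (C_V + 4 * Real.exp (2 * M) * C_Q * C_K * C_V) * Δ₂ +
        (Real.exp M * C_V + 2 * Real.exp (2 * M) * C_Q * C_K * C_V) * r₂) :
    (∫ y, ‖g₁ y - g₂ y‖ ∂μ)
      ≤ ΔΦ₁ + ΔΦ₂ + 2 * Real.exp (2 * M) * C_Q * C_K * C_V * (r₁ + r₂) :=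
  graph_transformer_transferability_general μ Q K V C_Q C_K C_V Δ₁ Δ₂ r₁ r₂ hCQ hCK hCV hr₁ hr₂ hQ
    hK hV f hfLip hf1 N₁ x₁ P₁ hP₁meas hP₁disj hP₁cover hP₁ball hP₁mass Xv₁ hXv₁ hXv₁1 N₂ x₂ P₂
    hP₂meas hP₂disj hP₂cover hP₂ball hP₂mass Xv₂ hXv₂ hXv₂1 M hM0 hM₁ hM₂ hMf g₁ g₂ hg₁ hg₂ ΔΦ₁ ΔΦ₂
    hΔΦ₁ hΔΦ₂
end
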